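/- arXiv:2405.03774 — 2 statements merged into one kernel-verified Lean document; each statement's English description precedes it below -/
import Mathlib

section
/- For a tour of n+2 nodes, the cost of the tour equals the cost of the subtour on any subset of its nodes (in induced order) plus the sum over the remaining nodes of their insertion cost increments, when the tour is built by successive insertions. -/
open scoped BigOperators

/-- Cost of a path: sum of costs over consecutive pairs. -/
def tourCost {V : Type*} (C : V → V → ℝ) : List V → ℝ
  | a :: b :: t => C a b + tourCost C (b :: t)
  | _ => 0

lemma tourCost_append {V : Type*} (C : V → V → ℝ) (x : V) (rest : List V) :
    ∀ (A : List V), tourCost C (A ++ x :: rest) =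
      tourCost C (A ++ [x]) + tourCost C (x :: rest)
  | [] => by simp [tourCost]
  | [a] => by simp [tourCost]
  | a :: b :: A => by
    have := tourCost_append C x rest (b :: A)
    simp only [List.cons_append, tourCost, List.append_eq] at this ⊢
    rw [this]; ring

lemma telescope_aux {V : Type*} (C : V → V → ℝ) :
    ∀ (m : ℕ) (L : Fin (m + 1) → List V) (d : Fin m → ℝ),
    (∀ t : Fin m, tourCost C (L t.succ) = tourCost C (L t.castSucc) + d t) →
    tourCost C (L (Fin.last m)) = tourCost C (L 0) + ∑ t : Fin m, d t
  | 0, L, d, _ => by simp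
  | n + 1, L, d, h => by
    have ih := telescope_aux C n (fun t => L t.castSucc) (fun t => d t.castSucc)
      (fun t => by simpa only [Fin.succ_castSucc] using h t.castSucc)
    have hlast : (Fin.last (n + 1)) = (Fin.last n : Fin (n+1)).succ := rfl
    rw [hlast, h (Fin.last n), Fin.sum_univ_castSucc]
    have : (Fin.last n : Fin (n+1)).castSucc = ((fun t : Fin (n+1) => t.castSucc) (Fin.last n)) := rfl
    rw [this]
    rw [ih]
    simp [Fin.castSucc_zero]
    ring

/-- If a tour is built from a subtour by successive insertions, its cost is
the subtour cost plus the sum of the insertion cost increments. -/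
theorem tour_cost_telescopes {V : Type*} (C : V → V → ℝ) (m : ℕ)
    (L : Fin (m + 1) → List V)
    (A B : Fin m → List V) (i j k : Fin m → V)
    (hstep : ∀ t : Fin m,
      L t.castSucc = A t ++ i t :: j t :: B t ∧
      L t.succ = A t ++ i t :: k t :: j t :: B t) :
    tourCost C (L (Fin.last m)) =
      tourCost C (L 0) + ∑ t : Fin m, (C (i t) (k t) + C (k t) (j t) - C (i t) (j t)) := by
  apply telescope_aux
  intro t
  obtain ⟨h1, h2⟩ := hstep t
  rw [h1, h2, tourCost_append C (i t) (k t :: j t :: B t) (A t),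
    tourCost_append C (i t) (j t :: B t) (A t)]
  simp [tourCost]; ring
end

section
/- Subtour elimination: a 0-1 edge selection x on the complete digraph over node set V̄ with exactly one outgoing and one incoming selected edge per node, and satisfying Σ_{i,j ∈ S} x_{ij} ≤ |S| − 1 for every proper subset S of V̄ with 2 ≤ |S| ≤ |V̄|−1, corresponds to a single Hamiltonian cycle on V̄. -/
/-!
Every row of `x` sums to one, so `x` is the graph of a successor map `succ : V → V`, without fixed
points since the diagonal vanishes. A nonempty set `S` closed under `succ` carries at least `|S|`
selected edges, so the subtour constraints force `S = V`. Applied to the image of `succ` this makes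
`succ` a permutation, and applied to one of its orbits it makes that permutation a single cycle
through every node.
-/

open Finset Function

theorem Fintype.existsUnique_eq_one_of_sum_eq_one {ι : Type*} [Fintype ι] {f : ι → ℕ}
    (h : ∑ i, f i = 1) : ∃! i, f i = 1 := by
  obtain ⟨i, -, hi⟩ := exists_ne_zero_of_sum_ne_zero (h ▸ one_ne_zero)
  have hle : ∀ j, f j ≤ 1 := fun j => h ▸ single_le_sum (by simp) (mem_univ j)
  refine ⟨i, by have := hle i; omega, fun j hj => ?_⟩
  by_contra hji
  have := add_le_sum (f := f) (by simp) (mem_univ j) (mem_univ i) hji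
  omega

theorem Finset.card_le_sum_sum_of_mapsTo {V : Type*} {x : V → V → ℕ} {f : V → V}
    {S : Finset V} (hx : ∀ i ∈ S, x i (f i) = 1) (hS : ∀ i ∈ S, f i ∈ S) :
    #S ≤ ∑ i ∈ S, ∑ j ∈ S, x i j :=
  calc #S = ∑ i ∈ S, x i (f i) := by
        rw [card_eq_sum_ones]; exact sum_congr rfl fun i hi => (hx i hi).symm
    _ ≤ ∑ i ∈ S, ∑ j ∈ S, x i j :=
        sum_le_sum fun i hi => single_le_sum (by simp) (hS i hi)

theorem Finset.eq_univ_of_mapsTo_of_subtour {V : Type*} [Fintype V] {x : V → V → ℕ}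
    {f : V → V} (hsub : ∀ S : Finset V, 2 ≤ #S → #S ≤ Fintype.card V - 1 →
      ∑ i ∈ S, ∑ j ∈ S, x i j ≤ #S - 1)
    {S : Finset V} (hx : ∀ i ∈ S, x i (f i) = 1) (hS : ∀ i ∈ S, f i ∈ S)
    {a : V} (ha : a ∈ S) (hfa : f a ≠ a) : S = univ := by
  by_contra hne
  obtain ⟨b, hb⟩ : ∃ b, b ∉ S := by simpa [eq_univ_iff_forall] using hne
  have htwo : 2 ≤ #S := one_lt_card.mpr ⟨a, ha, f a, hS a ha, hfa.symm⟩
  have hproper := card_lt_univ_of_notMem hb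
  have hlower := card_le_sum_sum_of_mapsTo hx hS
  have hupper := hsub S htwo (by omega)
  omega

theorem Equiv.Perm.isCycle_of_forall_mapsTo_eq_univ {V : Type*} [Fintype V] {σ : Perm V}
    {a : V} (ha : σ a ≠ a)
    (h : ∀ S : Finset V, a ∈ S → (∀ i ∈ S, σ i ∈ S) → S = univ) : σ.IsCycle := by
  classical
  have horbit := h {b | σ.SameCycle a b} (by simp [SameCycle.refl]) fun i hi => by
    simpa [sameCycle_apply_right] using hi
  exact ⟨a, ha, fun b _ => by simpa using eq_univ_iff_forall.mp horbit b⟩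

theorem subtour_elimination_hamiltonian_general {V : Type*} [Fintype V] [DecidableEq V]
    (hV : 3 ≤ Fintype.card V) (x : V → V → ℕ)
    (hdiag : ∀ i, x i i = 0)
    (hout : ∀ i, ∑ j, x i j = 1)
    (hsub : ∀ S : Finset V, 2 ≤ S.card → S.card ≤ Fintype.card V - 1 →
      ∑ i ∈ S, ∑ j ∈ S, x i j ≤ S.card - 1) :
    ∃ σ : Equiv.Perm V, σ.IsCycle ∧ σ.support = Finset.univ ∧
      ∀ i j, x i j = 1 ↔ σ i = j := by
  choose succ hsucc huniq using fun i => Fintype.existsUnique_eq_one_of_sum_eq_one (hout i)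
  have hfix : ∀ i, succ i ≠ i := fun i h => by simpa [h, hdiag] using hsucc i
  have hclosed {S : Finset V} {a : V} (ha : a ∈ S) (hS : ∀ i ∈ S, succ i ∈ S) : S = univ :=
    eq_univ_of_mapsTo_of_subtour hsub (fun i _ => hsucc i) hS ha (hfix a)
  obtain ⟨a⟩ : Nonempty V := Fintype.card_pos_iff.mp (by omega)
  have hsurj : Surjective succ := by
    have himage := hclosed (mem_image_of_mem succ (mem_univ a)) fun i _ =>
      mem_image_of_mem succ (mem_univ i)
    simpa [eq_univ_iff_forall, Surjective] using himage
  let σ := Equiv.ofBijective succ ⟨Finite.injective_iff_surjective.mpr hsurj, hsurj⟩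
  refine ⟨σ, ?_, ?_, fun i j => ⟨fun h => (huniq i j h).symm, fun h => h ▸ hsucc i⟩⟩
  · exact Equiv.Perm.isCycle_of_forall_mapsTo_eq_univ (hfix a) fun S ha hS => hclosed ha hS
  · exact eq_univ_of_forall fun i => Equiv.Perm.mem_support.mpr (hfix i)

/-- Subtour elimination: a 0-1 edge selection with unit out- and in-degree at
every node satisfying the subtour elimination constraints on every proper
subset corresponds to a single Hamiltonian (directed) cycle on all nodes. -/
theorem subtour_elimination_hamiltonian {V : Type*} [Fintype V] [DecidableEq V]
    (hV : 3 ≤ Fintype.card V) (x : V → V → ℕ)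
    (h01 : ∀ i j, x i j = 0 ∨ x i j = 1)
    (hdiag : ∀ i, x i i = 0)
    (hout : ∀ i, ∑ j, x i j = 1)
    (hin : ∀ j, ∑ i, x i j = 1)
    (hsub : ∀ S : Finset V, 2 ≤ S.card → S.card ≤ Fintype.card V - 1 →
      ∑ i ∈ S, ∑ j ∈ S, x i j ≤ S.card - 1) :
    ∃ σ : Equiv.Perm V, σ.IsCycle ∧ σ.support = Finset.univ ∧
      ∀ i j, x i j = 1 ↔ σ i = j :=
  subtour_elimination_hamiltonian_general hV x hdiag hout hsub
end
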